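/- For every n ≥ 2 and h ≥ 0, the set of bargraphs of semiperimeter n whose least column height exceeds h is in bijection with the set of bargraphs of semiperimeter n−h; explicitly, a bijection is given by deleting the initial U^h and the final D^h. -/

import Mathlib

/-- Steps of bargraphs / Motzkin paths. -/
inductive Step where
  | U : Step
  | H : Step
  | D : Step
deriving DecidableEq

/-- Vertical displacement of a step. -/
def Step.val : Step → ℤ
  | .U => 1
  | .H => 0
  | .D => -1

/-- Mirror of a step (swap U and D). -/
def Step.mirror : Step → Step
  | .U => .D
  | .H => .H
  | .D => .U

/-- Final height of a word. -/
def hgt (w : List Step) : ℤ := (w.map Step.val).sum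

/-- A Motzkin path prefix: never goes below the x-axis. -/
def IsMotzkinPrefix (w : List Step) : Prop := ∀ p : List Step, p <+: w → 0 ≤ hgt p

/-- A Motzkin path: never below the x-axis, ends at height 0. -/
def IsMotzkin (w : List Step) : Prop := IsMotzkinPrefix w ∧ hgt w = 0

/-- No peak `UD` and no valley `DU`. -/
def Cornerless (w : List Step) : Prop :=
  ¬ [Step.U, Step.D] <:+: w ∧ ¬ [Step.D, Step.U] <:+: w

/-- A bargraph: starts at the origin, ends on the x-axis, stays strictly above the
x-axis except at the endpoints, and has no factor `UD` or `DU`. -/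
def IsBargraph (w : List Step) : Prop :=
  2 ≤ w.length ∧ hgt w = 0 ∧
    (∀ p : List Step, p <+: w → p ≠ [] → p ≠ w → 0 < hgt p) ∧ Cornerless w

/-- Semiperimeter: number of `U` steps plus number of `H` steps. -/
def semi (w : List Step) : ℕ := w.count Step.U + w.count Step.H

/-- Length of the initial run of `U` steps. -/
def leadU : List Step → ℕ
  | Step.U :: rest => leadU rest + 1
  | _ => 0

/-- Length of the initial run of `H` steps. -/
def leadH : List Step → ℕ
  | Step.H :: rest => leadH rest + 1
  | _ => 0

/-- Length of the initial run of `D` steps. -/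
def leadD : List Step → ℕ
  | Step.D :: rest => leadD rest + 1
  | _ => 0

/-- Length of the first maximal run of `D` steps (0 if none). -/
def firstDescLen : List Step → ℕ
  | [] => 0
  | Step.D :: rest => leadD rest + 1
  | _ :: rest => firstDescLen rest

/-- Number of occurrences of the two-letter factor `a b`. -/
def cnt2 (a b : Step) : List Step → ℕ
  | x :: y :: rest => (if x = a ∧ y = b then 1 else 0) + cnt2 a b (y :: rest)
  | _ => 0

/-- Heights of the columns (`H` steps), starting from a given height. -/
def colHeights : ℤ → List Step → List ℤ
  | _, [] => []
  | h, Step.U :: rest => colHeights (h + 1) rest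
  | h, Step.H :: rest => h :: colHeights h rest
  | h, Step.D :: rest => colHeights (h - 1) rest

/-- Width of the leftmost maximal horizontal segment (0 if none). -/
def lhsW : List Step → ℕ
  | [] => 0
  | Step.H :: rest => leadH rest + 1
  | _ :: rest => lhsW rest

/-- Delete `h` steps at the start of the leftmost horizontal segment. -/
def stripLeadH (h : ℕ) : List Step → List Step
  | [] => []
  | Step.H :: rest => List.drop h (Step.H :: rest)
  | s :: rest => s :: stripLeadH h rest

/-- Number of initial columns of height 1: largest `j` such that the word begins `U H^j`. -/
def iuc : List Step → ℕ
  | Step.U :: rest => leadH rest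
  | _ => 0

/-- Number of maximal horizontal segments. -/
def hsCount : List Step → ℕ
  | [] => 0
  | [Step.H] => 1
  | [_] => 0
  | a :: b :: rest => (if a = Step.H ∧ b ≠ Step.H then 1 else 0) + hsCount (b :: rest)

/-- Mirror image: reverse the word and swap `U` with `D`. -/
def mir (w : List Step) : List Step := (w.reverse).map Step.mirror

/-- Shape of strictly alternating bargraphs:
`U^{i₁} H D^{k₁} H U^{i₂} H D^{k₂} H ⋯ U^{iₘ} H D^{kₘ}` with all `iᵣ, kᵣ ≥ 1`. -/
inductive SAShape : List Step → Prop where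
  | base (i k : ℕ) : 1 ≤ i → 1 ≤ k →
      SAShape (List.replicate i Step.U ++ [Step.H] ++ List.replicate k Step.D)
  | cons (i k : ℕ) (w : List Step) : 1 ≤ i → 1 ≤ k → SAShape w →
      SAShape (List.replicate i Step.U ++ [Step.H] ++ List.replicate k Step.D ++ [Step.H] ++ w)

/-- A strictly alternating bargraph. -/
def IsStrictAlt (w : List Step) : Prop := IsBargraph w ∧ SAShape w

/-- A secondary structure on `{0, …, m-1}`: all consecutive edges are present, every
vertex has at most one non-consecutive neighbour, and there are no crossing edges. -/
def IsSecondaryStructure {m : ℕ} (G : SimpleGraph (Fin m)) : Prop :=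
  (∀ i j : Fin m, (i : ℕ) + 1 = (j : ℕ) → G.Adj i j) ∧
  (∀ i j k : Fin m, G.Adj i j → G.Adj i k →
      (i : ℕ) + 1 ≠ (j : ℕ) → (j : ℕ) + 1 ≠ (i : ℕ) →
      (i : ℕ) + 1 ≠ (k : ℕ) → (k : ℕ) + 1 ≠ (i : ℕ) → j = k) ∧
  ¬ ∃ i j k l : Fin m, (i : ℕ) < (j : ℕ) ∧ (j : ℕ) < (k : ℕ) ∧ (k : ℕ) < (l : ℕ) ∧
      G.Adj i k ∧ G.Adj j l

/-- Generating function of bargraphs: `x` (variable 0) marks `H` steps,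
`y` (variable 1) marks `U` steps. -/
noncomputable def BG : MvPowerSeries (Fin 2) ℚ :=
  fun d => (Nat.card {w : List Step //
    IsBargraph w ∧ w.count Step.H = d 0 ∧ w.count Step.U = d 1} : ℚ)

/-- Generating function of cornerless Motzkin paths. -/
noncomputable def MG : MvPowerSeries (Fin 2) ℚ :=
  fun d => (Nat.card {w : List Step //
    IsMotzkin w ∧ Cornerless w ∧ w.count Step.H = d 0 ∧ w.count Step.U = d 1} : ℚ)

/-- Generating function of bargraphs avoiding the factor `DH`. -/
noncomputable def BDH : MvPowerSeries (Fin 2) ℚ :=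
  fun d => (Nat.card {w : List Step //
    IsBargraph w ∧ ¬ [Step.D, Step.H] <:+: w ∧
      w.count Step.H = d 0 ∧ w.count Step.U = d 1} : ℚ)

/-- Generating function of bargraphs avoiding the factors `DH` and `HH`. -/
noncomputable def BDHHH : MvPowerSeries (Fin 2) ℚ :=
  fun d => (Nat.card {w : List Step //
    IsBargraph w ∧ ¬ [Step.D, Step.H] <:+: w ∧ ¬ [Step.H, Step.H] <:+: w ∧
      w.count Step.H = d 0 ∧ w.count Step.U = d 1} : ℚ)

/-- Generating function of cornerless Motzkin path prefixes ending at height `h`. -/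
noncomputable def Pgf (h : ℕ) : MvPowerSeries (Fin 2) ℚ :=
  fun d => (Nat.card {w : List Step //
    IsMotzkinPrefix w ∧ Cornerless w ∧ hgt w = (h : ℤ) ∧
      w.count Step.H = d 0 ∧ w.count Step.U = d 1} : ℚ)

/-- Decomposition `G = U^a G₁ H G₂ D^a` of a strictly alternating bargraph. -/
def SADecomp (t : ℕ × List Step × List Step) (G : List Step) : Prop :=
  1 ≤ t.1 ∧ IsStrictAlt t.2.1 ∧ IsStrictAlt (Step.U :: (t.2.2 ++ [Step.D])) ∧
    G = List.replicate t.1 Step.U ++ t.2.1 ++ [Step.H] ++ t.2.2 ++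
      List.replicate t.1 Step.D

/-!
Write `pad k m` for `U^k m D^k`. The columns of `pad k m` are those of `m` raised by `k`, so
padding a bargraph yields a bargraph whose columns all exceed `k`. Conversely, let `U m D` be a
bargraph whose columns all exceed `1`. If `m` came back to height `0` strictly inside, the two
steps around that point could form neither a corner nor a column of `m` at height `0`, so they
would be `UU` or `DD`, and `U m D` would touch the axis one step earlier or later. Hence `m` is a bargraph, and peeling off one layer at a time gives `U^h m D^h`.
-/

@[simp] lemma hgt_nil : hgt [] = 0 := rfl

@[simp] lemma hgt_cons (a : Step) (w : List Step) : hgt (a :: w) = a.val + hgt w := by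
  simp [hgt]

@[simp] lemma hgt_append (u v : List Step) : hgt (u ++ v) = hgt u + hgt v := by
  simp [hgt]

lemma colHeights_append (u v : List Step) (a : ℤ) :
    colHeights a (u ++ v) = colHeights a u ++ colHeights (a + hgt u) v := by
  induction u generalizing a with
  | nil => simp [colHeights]
  | cons x u ih => cases x <;> simp [colHeights, ih, Step.val] <;> ring_nf

lemma colHeights_add (w : List Step) (a b : ℤ) :
    colHeights (a + b) w = (colHeights a w).map (· + b) := by
  induction w generalizing a with
  | nil => rfl
  | cons x w ih =>
    cases x
    · simp only [colHeights, ← ih]; ring_nf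
    · simp [colHeights, ih]
    · simp only [colHeights, ← ih]; ring_nf

lemma colHeights_eq_nil {w : List Step} (hw : Step.H ∉ w) (a : ℤ) : colHeights a w = [] := by
  induction w generalizing a with
  | nil => rfl
  | cons x w ih =>
    simp only [List.mem_cons, not_or] at hw
    cases x <;> simp_all [colHeights]

lemma hgt_mem_colHeights (p s : List Step) : hgt p ∈ colHeights 0 (p ++ Step.H :: s) := by
  simp [colHeights_append, colHeights]

lemma exists_of_mem_colHeights {c a : ℤ} {w : List Step} (hc : c ∈ colHeights a w) :
    ∃ p s, w = p ++ Step.H :: s ∧ c = a + hgt p := by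
  induction w generalizing a with
  | nil => simp [colHeights] at hc
  | cons x w ih =>
    cases x
    · obtain ⟨p, s, rfl, rfl⟩ := ih hc
      exact ⟨Step.U :: p, s, rfl, by simp [Step.val]; ring⟩
    · rcases List.mem_cons.1 hc with rfl | hc
      · exact ⟨[], w, rfl, by simp⟩
      · obtain ⟨p, s, rfl, rfl⟩ := ih hc
        exact ⟨Step.H :: p, s, rfl, by simp [Step.val]⟩
    · obtain ⟨p, s, rfl, rfl⟩ := ih hc
      exact ⟨Step.D :: p, s, rfl, by simp [Step.val]; ring⟩

def NoCorner (a b : Step) : Prop := ¬(a = Step.U ∧ b = Step.D) ∧ ¬(a = Step.D ∧ b = Step.U)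

lemma cornerless_iff_isChain {w : List Step} : Cornerless w ↔ w.IsChain NoCorner := by
  rw [List.isChain_iff_forall_rel_of_append_cons_cons]
  constructor
  · rintro ⟨hUD, hDU⟩ a b l₁ l₂ rfl
    refine ⟨?_, ?_⟩ <;> rintro ⟨rfl, rfl⟩
    exacts [hUD ⟨l₁, l₂, by simp⟩, hDU ⟨l₁, l₂, by simp⟩]
  · intro h
    refine ⟨?_, ?_⟩ <;> rintro ⟨l₁, l₂, rfl⟩
    exacts [(h (l₁ := l₁) (l₂ := l₂) (by simp)).1 ⟨rfl, rfl⟩,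
      (h (l₁ := l₁) (l₂ := l₂) (by simp)).2 ⟨rfl, rfl⟩]

lemma List.forall_proper_prefix_iff {α : Type*} {P : List α → Prop} {w : List α} :
    (∀ p, p <+: w → p ≠ [] → p ≠ w → P p) ↔ ∀ p s, p ++ s = w → p ≠ [] → s ≠ [] → P p := by
  constructor
  · rintro h p s rfl hp hs
    exact h p (List.prefix_append p s) hp (by simpa using hs)
  · rintro h p ⟨s, rfl⟩ hp hps
    exact h p s rfl hp (by rintro rfl; simp at hps)

lemma isBargraph_iff {w : List Step} : IsBargraph w ↔ 2 ≤ w.length ∧ hgt w = 0 ∧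
    (∀ p s, p ++ s = w → p ≠ [] → s ≠ [] → 0 < hgt p) ∧ Cornerless w := by
  rw [IsBargraph, List.forall_proper_prefix_iff]

namespace IsBargraph

variable {w m : List Step}

lemma hgt_pos {p s : List Step} (hw : IsBargraph w) (h : p ++ s = w) (hp : p ≠ []) (hs : s ≠ []) :
    0 < hgt p :=
  (isBargraph_iff.1 hw).2.2.1 p s h hp hs

lemma hgt_nonneg {p s : List Step} (hw : IsBargraph w) (h : p ++ s = w) : 0 ≤ hgt p := by
  rcases eq_or_ne p [] with rfl | hp
  · rfl
  rcases eq_or_ne s [] with rfl | hs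
  · simp only [List.append_nil] at h
    exact h ▸ hw.2.1.ge
  exact (hw.hgt_pos h hp hs).le

lemma exists_eq_cons_append (hw : IsBargraph w) : ∃ m, w = Step.U :: m ++ [Step.D] := by
  obtain ⟨a, t, rfl⟩ := List.exists_cons_of_ne_nil (List.ne_nil_of_length_pos (by linarith [hw.1]))
  obtain ⟨m, b, rfl⟩ := (List.eq_nil_or_concat' t).resolve_left (by rintro rfl; simpa using hw.1)
  have ha : 0 < hgt [a] := hw.hgt_pos (s := m ++ [b]) rfl (by simp) (by simp)
  have hb : 0 < hgt (a :: m) := hw.hgt_pos (s := [b]) (by simp) (by simp) (by simp)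
  have h0 : hgt (a :: m ++ [b]) = 0 := hw.2.1
  refine ⟨m, ?_⟩
  cases a <;> cases b <;> simp [Step.val] at ha hb h0 ⊢ <;> omega

lemma colHeights_pos (hw : IsBargraph w) : ∀ c ∈ colHeights 0 w, 0 < c := by
  intro c hc
  obtain ⟨p, s, rfl, rfl⟩ := exists_of_mem_colHeights hc
  obtain ⟨m, hm⟩ := hw.exists_eq_cons_append
  rw [zero_add]
  refine hw.hgt_pos rfl ?_ (by simp)
  rintro rfl
  simp at hm

lemma semi_pos (hw : IsBargraph w) : 0 < semi w := by
  obtain ⟨m, rfl⟩ := hw.exists_eq_cons_append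
  simp [semi]

lemma cons_append (hw : IsBargraph w) : IsBargraph (Step.U :: w ++ [Step.D]) := by
  refine isBargraph_iff.2 ⟨by simp, by simpa [Step.val] using hw.2.1, ?_, ?_⟩
  · rintro (_ | ⟨a, p⟩) s h hp hs
    · exact absurd rfl hp
    obtain ⟨s', z, rfl⟩ := (List.eq_nil_or_concat' s).resolve_left hs
    simp only [List.cons_append, List.cons.injEq, ← List.append_assoc] at h
    obtain ⟨rfl, h⟩ := h
    have := hw.hgt_nonneg (List.append_inj_left' h rfl)
    simp [Step.val]
    omega
  · obtain ⟨k, hk⟩ := hw.exists_eq_cons_append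
    have hhead : (w ++ [Step.D]).head? = some Step.U := by simp [hk]
    have hlast : w.getLast? = some Step.D := by rw [hk]; exact List.getLast?_concat
    rw [cornerless_iff_isChain, List.cons_append, List.isChain_cons, List.isChain_append]
    simp [hhead, hlast, cornerless_iff_isChain.1 hw.2.2.2, NoCorner]

lemma cornerless_of_cons_append (hw : IsBargraph (Step.U :: m ++ [Step.D])) : Cornerless m :=
  ⟨fun h => hw.2.2.2.1 (h.trans ⟨[Step.U], [Step.D], rfl⟩),
    fun h => hw.2.2.2.2 (h.trans ⟨[Step.U], [Step.D], rfl⟩)⟩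

lemma hgt_pos_of_cons_append {p s : List Step} (hw : IsBargraph (Step.U :: m ++ [Step.D]))
    (hcol : ∀ c ∈ colHeights 0 m, 0 < c) (h : p ++ s = m) (hp : p ≠ []) (hs : s ≠ []) :
    0 < hgt p := by
  subst h
  have hcl := hw.cornerless_of_cons_append
  have h1 : 0 < hgt (Step.U :: p) := hw.hgt_pos (s := s ++ [Step.D]) (by simp) (by simp) (by simp)
  obtain ⟨p, x, rfl⟩ := (List.eq_nil_or_concat' p).resolve_left hp
  obtain ⟨y, s, rfl⟩ := List.exists_cons_of_ne_nil hs
  by_contra hle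
  have hp0 : hgt p + x.val = 0 := by simp [Step.val] at h1 hle ⊢; omega
  have hcol_left : x ≠ Step.H := by
    rintro rfl
    exact (hcol _ (by simpa using hgt_mem_colHeights p (y :: s))).ne' (by simpa [Step.val] using hp0)
  have hcol_right : y ≠ Step.H := by
    rintro rfl
    exact (hcol _ (hgt_mem_colHeights (p ++ [x]) s)).ne' (by simpa using hp0)
  cases x <;> cases y <;> simp only [ne_eq, not_true_eq_false] at hcol_left hcol_right
  · have := hw.hgt_pos (p := Step.U :: p) (s := Step.U :: Step.U :: s ++ [Step.D])
      (by simp) (by simp) (by simp)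
    simp [Step.val] at this hp0
    omega
  · exact hcl.1 ⟨p, s, by simp⟩
  · exact hcl.2 ⟨p, s, by simp⟩
  · have := hw.hgt_pos (p := Step.U :: (p ++ [Step.D, Step.D])) (s := s ++ [Step.D])
      (by simp) (by simp) (by simp)
    simp [Step.val] at this hp0
    omega

lemma of_cons_append (hw : IsBargraph (Step.U :: m ++ [Step.D]))
    (hcol : ∀ c ∈ colHeights 0 m, 0 < c) : IsBargraph m := by
  have hm0 : hgt m = 0 := by simpa [Step.val] using hw.2.1
  refine isBargraph_iff.2 ⟨?_, hm0, fun p s h => hw.hgt_pos_of_cons_append hcol h,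
    hw.cornerless_of_cons_append⟩
  rcases m with _ | ⟨x, _ | ⟨y, t⟩⟩
  · exact absurd (List.infix_refl _) hw.2.2.2.1
  · cases x
    · simp [Step.val] at hm0
    · exact absurd (hcol 0 (by simp [colHeights])) (lt_irrefl 0)
    · simp [Step.val] at hm0
  · simp

end IsBargraph

def pad (k : ℕ) (m : List Step) : List Step :=
  List.replicate k Step.U ++ m ++ List.replicate k Step.D

def unpad (k : ℕ) (w : List Step) : List Step := ((w.drop k).reverse.drop k).reverse

lemma pad_succ (k : ℕ) (m : List Step) : pad (k + 1) m = Step.U :: pad k m ++ [Step.D] := by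
  rw [pad, pad, List.replicate_succ' (a := Step.D)]
  simp [List.replicate_succ]

lemma unpad_pad (k : ℕ) (m : List Step) : unpad k (pad k m) = m := by
  simp [pad, unpad, List.drop_left', List.reverse_replicate]

lemma semi_pad (k : ℕ) (m : List Step) : semi (pad k m) = semi m + k := by
  simp [pad, semi, List.count_replicate]
  omega

lemma colHeights_pad (k : ℕ) (m : List Step) :
    colHeights 0 (pad k m) = (colHeights 0 m).map (· + (k : ℤ)) := by
  have hm := colHeights_add m 0 k
  rw [zero_add] at hm
  simp [pad, colHeights_append, colHeights_eq_nil, hgt, Step.val, hm]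

lemma isBargraph_pad {m : List Step} (hm : IsBargraph m) (k : ℕ) : IsBargraph (pad k m) := by
  induction k with
  | zero => simpa [pad] using hm
  | succ k ih => exact pad_succ k m ▸ ih.cons_append

lemma lt_of_mem_colHeights_pad {m : List Step} (hm : IsBargraph m) (k : ℕ) :
    ∀ c ∈ colHeights 0 (pad k m), (k : ℤ) < c := by
  simp only [colHeights_pad, List.mem_map]
  rintro _ ⟨c, hc, rfl⟩
  linarith [hm.colHeights_pos c hc]

namespace IsBargraph

variable {w : List Step} {k : ℕ}

lemma exists_eq_pad (hw : IsBargraph w) (hcol : ∀ c ∈ colHeights 0 w, (k : ℤ) < c) :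
    ∃ m, IsBargraph m ∧ w = pad k m := by
  induction k generalizing w with
  | zero => exact ⟨w, hw, by simp [pad]⟩
  | succ k ih =>
    obtain ⟨w', rfl⟩ := hw.exists_eq_cons_append
    have hcol' : ∀ c ∈ colHeights 0 w', (k : ℤ) < c := by
      intro c hc
      have := hcol (c + 1) (by simpa using colHeights_pad 1 w' ▸ List.mem_map_of_mem hc)
      push_cast at this
      omega
    have hw' := hw.of_cons_append fun c hc => by linarith [hcol' c hc]
    obtain ⟨m, hm, rfl⟩ := ih hw' hcol'
    exact ⟨m, hm, (pad_succ k m).symm⟩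

lemma isBargraph_unpad (hw : IsBargraph w) (hcol : ∀ c ∈ colHeights 0 w, (k : ℤ) < c) :
    IsBargraph (unpad k w) := by
  obtain ⟨m, hm, rfl⟩ := hw.exists_eq_pad hcol
  rwa [unpad_pad]

lemma pad_unpad (hw : IsBargraph w) (hcol : ∀ c ∈ colHeights 0 w, (k : ℤ) < c) :
    pad k (unpad k w) = w := by
  obtain ⟨m, -, rfl⟩ := hw.exists_eq_pad hcol
  rw [unpad_pad]

end IsBargraph

/-- bargraphs of semiperimeter `n` with least column height `> h` are in
bijection with bargraphs of semiperimeter `n - h`, by deleting the initial `U^h` and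
the final `D^h`. -/
theorem lch_bijection :
    ∀ n h : ℕ, 2 ≤ n →
      ∃ e : {w : List Step // IsBargraph w ∧ semi w = n ∧
              ∀ c ∈ colHeights 0 w, (h : ℤ) < c} ≃
            {w : List Step // IsBargraph w ∧ semi w = n - h},
        ∀ w, (e w).1 = ((w.1.drop h).reverse.drop h).reverse := by
  intro n h _
  refine ⟨
    { toFun := fun w => ⟨unpad h w, w.2.1.isBargraph_unpad w.2.2.2, ?_⟩
      invFun := fun m => ⟨pad h m, isBargraph_pad m.2.1 h, ?_, lt_of_mem_colHeights_pad m.2.1 h⟩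
      left_inv := fun w => Subtype.ext (w.2.1.pad_unpad w.2.2.2)
      right_inv := fun m => Subtype.ext (unpad_pad h m) }, fun _ => rfl⟩
  · have := semi_pad h (unpad h w)
    rw [w.2.1.pad_unpad w.2.2.2, w.2.2.1] at this
    omega
  · rw [semi_pad, m.2.2]
    have := m.2.1.semi_pos
    omega
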